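/- Let X be a connected locally compact second countable Hausdorff space, dx a regular Borel measure with full support, and (T_t)_{t≥0} a positive Feller contraction semigroup on Lᵖ(X, dx), 1 ≤ p < ∞. If there exists a continuous function f ∈ Lᵖ with f(x) > 0 for all x and T_t f = f for all t > 0, then the semigroup is irreducible: every invariant Borel set E is either null or co-null. -/

import Mathlib

open MeasureTheory Filter

/-! Split `f = 1_E f + 1_{Eᶜ} f`. By invariance `T₁ (1_E f)` vanishes off `E`, so
`T₁ (1_{Eᶜ} f) = f - T₁ (1_E f)` dominates `1_{Eᶜ} f` pointwise; as `T₁` is a contraction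
of `Lᵖ` with `p < ∞`, it must fix `1_{Eᶜ} f`, hence also `1_E f`. By the Feller property
`1_E f` then has a continuous representative `u`, which a.e. takes only the values `0` and `f`.
The open sets `{u > 0}` and `{u < f}` cover `X` and meet in an open null set, so they are
disjoint, and connectedness makes one of them empty. -/

section Lp

variable {α : Type*} [MeasurableSpace α] {μ : Measure α} {p : ENNReal}

theorem ae_enorm_eq_of_ae_enorm_le_of_eLpNorm_le {E : Type*} [NormedAddCommGroup E]
    (hp0 : p ≠ 0) (hp : p ≠ ⊤) {f g : α → E} (hg : AEStronglyMeasurable g μ)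
    (hf : eLpNorm f p μ ≠ ⊤) (hfg : ∀ᵐ x ∂μ, ‖f x‖ₑ ≤ ‖g x‖ₑ)
    (hgf : eLpNorm g p μ ≤ eLpNorm f p μ) :
    ∀ᵐ x ∂μ, ‖f x‖ₑ = ‖g x‖ₑ := by
  have hq : 0 < p.toReal := ENNReal.toReal_pos hp0 hp
  have hint : ∫⁻ x, ‖g x‖ₑ ^ p.toReal ∂μ ≤ ∫⁻ x, ‖f x‖ₑ ^ p.toReal ∂μ := by
    rwa [eLpNorm_eq_lintegral_rpow_enorm_toReal hp0 hp,
      eLpNorm_eq_lintegral_rpow_enorm_toReal hp0 hp,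
      ENNReal.rpow_le_rpow_iff (one_div_pos.2 hq)] at hgf
  have hpow := ae_eq_of_ae_le_of_lintegral_le
    (hfg.mono fun x hx => ENNReal.rpow_le_rpow hx hq.le)
    (lintegral_rpow_enorm_lt_top_of_eLpNorm_lt_top hp0 hp hf.lt_top).ne
    (hg.enorm.pow_const _) hint
  exact hpow.mono fun x hx => ENNReal.rpow_left_injective hq.ne' hx

theorem MeasureTheory.Lp.eq_of_nonneg_of_le_of_norm_le [Fact (1 ≤ p)] (hp : p ≠ ⊤)
    {u v : Lp ℝ p μ} (hu : 0 ≤ u) (huv : u ≤ v) (hvu : ‖v‖ ≤ ‖u‖) : u = v := by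
  have hp0 : p ≠ 0 := (zero_lt_one.trans_le Fact.out).ne'
  rw [← Lp.coeFn_nonneg] at hu
  rw [← Lp.coeFn_le] at huv
  have hle : ∀ᵐ x ∂μ, ‖u x‖ₑ ≤ ‖v x‖ₑ := by
    filter_upwards [hu, huv] with x hux huvx
    rw [Real.enorm_of_nonneg hux, Real.enorm_of_nonneg (hux.trans huvx)]
    exact ENNReal.ofReal_le_ofReal huvx
  have heq := ae_enorm_eq_of_ae_enorm_le_of_eLpNorm_le hp0 hp (Lp.aestronglyMeasurable v)
    (Lp.eLpNorm_ne_top u) hle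
    ((ENNReal.toReal_le_toReal (Lp.eLpNorm_ne_top _) (Lp.eLpNorm_ne_top _)).1 hvu)
  refine Lp.ext ?_
  filter_upwards [hu, huv, heq] with x hux huvx hx
  rw [Real.enorm_of_nonneg hux, Real.enorm_of_nonneg (hux.trans huvx)] at hx
  exact ENNReal.ofReal_eq_ofReal_iff hux (hux.trans huvx) |>.1 hx

theorem MeasureTheory.Lp.map_eq_self_of_eq_indicator_of_invariant [Fact (1 ≤ p)] (hp : p ≠ ⊤)
    (S : Lp ℝ p μ →L[ℝ] Lp ℝ p μ) (hcontr : ∀ g, ‖S g‖ ≤ ‖g‖) (hpos : ∀ g, 0 ≤ g → 0 ≤ S g)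
    {f : Lp ℝ p μ} (hf : 0 ≤ f) (hfix : S f = f) {E : Set α}
    (hinv : ∀ g : Lp ℝ p μ, (∀ᵐ x ∂μ, x ∉ E → g x = 0) → ∀ᵐ x ∂μ, x ∉ E → S g x = 0)
    {g : Lp ℝ p μ} (hg : ⇑g =ᵐ[μ] E.indicator f) : S g = g := by
  rw [← Lp.coeFn_nonneg] at hf
  have hg_off : ∀ᵐ x ∂μ, x ∉ E → g x = 0 := by
    filter_upwards [hg] with x hx hxE
    rw [hx, Set.indicator_of_notMem hxE]
  have hh : ⇑(f - g) =ᵐ[μ] Eᶜ.indicator f := by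
    filter_upwards [Lp.coeFn_sub f g, hg] with x hsub hx
    rw [hsub, Pi.sub_apply, hx, Set.indicator_compl, Pi.sub_apply]
  have hh0 : 0 ≤ f - g := by
    rw [← Lp.coeFn_nonneg]
    filter_upwards [hh, hf] with x hx hfx
    rw [hx]
    exact Set.indicator_nonneg (fun _ _ => hfx) x
  have hle : f - g ≤ S (f - g) := by
    rw [← Lp.coeFn_le]
    have hS : ⇑(S (f - g)) =ᵐ[μ] ⇑f - ⇑(S g) := by
      rw [map_sub, hfix]; exact Lp.coeFn_sub f (S g)
    filter_upwards [hh, hS, hinv g hg_off, (Lp.coeFn_nonneg _).2 (hpos _ hh0)]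
      with x hx hSx hSg hSpos
    by_cases hxE : x ∈ E
    · rw [hx, Set.indicator_of_notMem (Set.notMem_compl_iff.2 hxE)]
      exact hSpos
    · rw [hx, Set.indicator_of_mem hxE, hSx, Pi.sub_apply, hSg hxE, sub_zero]
  have hh_fixed : f - g = S (f - g) :=
    Lp.eq_of_nonneg_of_le_of_norm_le hp hh0 hle (hcontr _)
  calc S g = S (f - (f - g)) := by rw [sub_sub_cancel]
    _ = g := by rw [map_sub, ← hh_fixed, hfix, sub_sub_cancel]

end Lp

theorem measure_eq_zero_or_measure_compl_eq_zero_of_ae_eq_indicator {X : Type*}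
    [TopologicalSpace X] [ConnectedSpace X] [MeasurableSpace X] {μ : Measure X}
    [μ.IsOpenPosMeasure] {u c : X → ℝ} (hu : Continuous u) (hc : Continuous c)
    (hcpos : ∀ x, 0 < c x) {E : Set X} (huE : u =ᵐ[μ] E.indicator c) :
    μ E = 0 ∨ μ Eᶜ = 0 := by
  have hU : IsOpen {x | 0 < u x} := isOpen_lt continuous_const hu
  have hV : IsOpen {x | u x < c x} := isOpen_lt hu hc
  have hdisj : Disjoint {x | 0 < u x} {x | u x < c x} := by
    rw [Set.disjoint_iff_inter_eq_empty]
    refine (hU.inter hV).eq_empty_of_measure_zero (μ := μ)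
      (measure_eq_zero_iff_ae_notMem.2 ?_)
    filter_upwards [huE] with x hx ⟨(hpos : 0 < u x), (hlt : u x < c x)⟩
    by_cases hxE : x ∈ E
    · rw [hx, Set.indicator_of_mem hxE] at hlt; exact hlt.false
    · rw [hx, Set.indicator_of_notMem hxE] at hpos; exact hpos.false
  have hcover : Set.univ ⊆ {x | 0 < u x} ∪ {x | u x < c x} := fun x _ =>
    (lt_or_ge 0 (u x)).imp id fun hx => hx.trans_lt (hcpos x)
  rcases isPreconnected_univ.subset_or_subset hU hV hdisj hcover with hpos | hlt
  · right
    refine measure_eq_zero_iff_ae_notMem.2 ?_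
    filter_upwards [huE] with x hx hxE
    have hux : 0 < u x := hpos (Set.mem_univ x)
    rw [hx, Set.indicator_of_notMem hxE] at hux
    exact hux.false
  · left
    refine measure_eq_zero_iff_ae_notMem.2 ?_
    filter_upwards [huE] with x hx hxE
    have hux : u x < c x := hlt (Set.mem_univ x)
    rw [hx, Set.indicator_of_mem hxE] at hux
    exact hux.false

theorem irreducible_of_connected
    {X : Type*} [TopologicalSpace X] [ConnectedSpace X]
    [MeasurableSpace X]
    (μ : Measure X) [μ.IsOpenPosMeasure]
    (p : ENNReal) [Fact (1 ≤ p)] (hp : p ≠ ⊤)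
    (T : ℝ → Lp ℝ p μ →L[ℝ] Lp ℝ p μ)
    (hcontr : ∀ t : ℝ, 0 ≤ t → ∀ g, ‖T t g‖ ≤ ‖g‖)
    (hpos : ∀ t : ℝ, 0 ≤ t → ∀ g : Lp ℝ p μ, 0 ≤ g → 0 ≤ T t g)
    (hFeller : ∀ (t : ℝ), 0 < t → ∀ g : Lp ℝ p μ,
      ∃ gc : X → ℝ, Continuous gc ∧ ⇑(T t g) =ᵐ[μ] gc)
    (f : Lp ℝ p μ) (fc : X → ℝ) (hfc : Continuous fc) (hfcpos : ∀ x, 0 < fc x)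
    (hfrep : ⇑f =ᵐ[μ] fc) (hfix : ∀ t : ℝ, 0 < t → T t f = f)
    (E : Set X) (hE : MeasurableSet E)
    (hEinv : ∀ g : Lp ℝ p μ, (∀ᵐ x ∂μ, x ∉ E → g x = 0) →
      ∀ t : ℝ, 0 ≤ t → ∀ᵐ x ∂μ, x ∉ E → (T t g) x = 0) :
    μ E = 0 ∨ μ Eᶜ = 0 := by
  have hf0 : 0 ≤ f := by
    rw [← Lp.coeFn_nonneg]
    filter_upwards [hfrep] with x hx
    exact hx ▸ (hfcpos x).le
  have hgm : MemLp (E.indicator f) p μ := (Lp.memLp f).indicator hE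
  have hg : ⇑hgm.toLp =ᵐ[μ] E.indicator f := hgm.coeFn_toLp
  have hTg : T 1 hgm.toLp = hgm.toLp :=
    Lp.map_eq_self_of_eq_indicator_of_invariant hp (T 1) (hcontr 1 zero_le_one)
      (hpos 1 zero_le_one) hf0 (hfix 1 one_pos) (fun g hg => hEinv g hg 1 zero_le_one) hg
  obtain ⟨u, hu, hTu⟩ := hFeller 1 one_pos hgm.toLp
  refine measure_eq_zero_or_measure_compl_eq_zero_of_ae_eq_indicator hu hfc hfcpos ?_
  filter_upwards [hTu, hg, hfrep] with x hux hgx hfx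
  rw [← hux, hTg, hgx]
  by_cases hxE : x ∈ E <;> simp [hxE, hfx]
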